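/- The functions f^t satisfy the dynamic programming recursion: for every integer 1 ≤ t ≤ n and every φ ∈ ℝ, f^t(φ) = min over integers 0 ≤ s ≤ t−1 of the infimum over φ' ∈ ℝ of [ f^s(φ') + C(s,t,φ',φ) + h(t−s) + β ], where f^0(φ') = 0 for all φ'. -/

import Mathlib

open Finset

/-- Segment cost `C(s,t,φ,ψ)`: cost of fitting data `y_{s+1:t}` with a linear
function taking value `φ` at time `s` and value `ψ` at time `t`. -/
noncomputable def segCost (y : ℕ → ℝ) (σ : ℝ) (s t : ℕ) (φ ψ : ℝ) : ℝ :=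
  (1 / σ ^ 2) * ∑ j ∈ Finset.Icc (s + 1) t,
    (y j - φ - ((ψ - φ) / ((t : ℝ) - (s : ℝ))) * ((j : ℝ) - (s : ℝ))) ^ 2

/-- `ValidCP t τ` : `τ` is a (possibly empty) strictly increasing vector of
changepoints `0 < τ₁ < ⋯ < τ_k < t`, i.e. an element of `T_t`. -/
def ValidCP (t : ℕ) (τ : List ℕ) : Prop :=
  τ.Chain' (· < ·) ∧ ∀ x ∈ τ, 0 < x ∧ x < t

/-- Penalised cost of segmenting `y_{1:t}` with changepoints `τ = (τ₁,…,τ_k)`,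
fitted values `φs 0, …, φs k` at times `0, τ₁, …, τ_k`, and fitted value `φ` at time `t`. -/
noncomputable def segTotal (y : ℕ → ℝ) (σ β : ℝ) (h : ℕ → ℝ) (t : ℕ)
    (τ : List ℕ) (φs : ℕ → ℝ) (φ : ℝ) : ℝ :=
  let p : ℕ → ℕ := fun i => (0 :: τ).getD i 0
  (∑ i ∈ Finset.range τ.length,
      (segCost y σ (p i) (p (i + 1)) (φs i) (φs (i + 1)) + h (p (i + 1) - p i)))
    + segCost y σ (p τ.length) t (φs τ.length) φ + h (t - p τ.length)
    + β * ((τ.length : ℝ) + 1)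

/-- `f_τ^t(φ)` : minimum penalised cost of segmenting `y_{1:t}` with changepoints `τ`
and fitted value `φ` at time `t`, minimised over the fitted values at the changepoints. -/
noncomputable def fseg (y : ℕ → ℝ) (σ β : ℝ) (h : ℕ → ℝ) (t : ℕ)
    (τ : List ℕ) (φ : ℝ) : ℝ :=
  ⨅ φs : ℕ → ℝ, segTotal y σ β h t τ φs φ

/-- `f^t(φ)` : minimum penalised cost of segmenting `y_{1:t}` with fitted value `φ`
at time `t`, minimised over all changepoint vectors in `T_t`; `f^0 ≡ 0`. -/
noncomputable def fDP (y : ℕ → ℝ) (σ β : ℝ) (h : ℕ → ℝ) (t : ℕ) (φ : ℝ) : ℝ :=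
  if t = 0 then 0 else ⨅ τ : {τ : List ℕ // ValidCP t τ}, fseg y σ β h t τ.1 φ

/-! The recursion comes from splitting off the last segment: a changepoint vector for `t` with
last entry `s` is a changepoint vector for `s` followed by `s`, and `segTotal` decomposes
accordingly, the fitted value at `s` being free. Since `⨅` over `ℝ` is `0` on sets unbounded
below, every infimum also needs the lower bound `segFloor`: segment costs are non-negative, and
there are at most `t` segments, each of length at most `t`. -/

/-- The changepoint `τ_i`, with `τ_0 = 0`; this is the `p` in the definition of `segTotal`. -/
def changepoint (τ : List ℕ) (i : ℕ) : ℕ := (0 :: τ).getD i 0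

section Segmentation

variable {y : ℕ → ℝ} {σ β : ℝ} {h : ℕ → ℝ}

lemma segTotal_eq (t : ℕ) (τ : List ℕ) (φs : ℕ → ℝ) (φ : ℝ) :
    segTotal y σ β h t τ φs φ =
      (∑ i ∈ range τ.length,
        (segCost y σ (changepoint τ i) (changepoint τ (i + 1)) (φs i) (φs (i + 1))
          + h (changepoint τ (i + 1) - changepoint τ i)))
      + segCost y σ (changepoint τ τ.length) t (φs τ.length) φ + h (t - changepoint τ τ.length)
      + β * ((τ.length : ℝ) + 1) := rfl

lemma segCost_nonneg (s t : ℕ) (φ ψ : ℝ) : 0 ≤ segCost y σ s t φ ψ := by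
  unfold segCost
  positivity

lemma changepoint_le {τ : List ℕ} {s : ℕ} (hτ : ∀ x ∈ τ, x ≤ s) (i : ℕ) :
    changepoint τ i ≤ s := by
  rw [changepoint, List.getD_eq_getElem?_getD]
  rcases hi : (0 :: τ)[i]? with _ | x
  · simp
  · rcases List.mem_cons.mp (List.mem_of_getElem? hi) with rfl | hx
    · simp
    · exact hτ x hx

lemma changepoint_append_singleton_of_le {τ : List ℕ} {s i : ℕ} (hi : i ≤ τ.length) :
    changepoint (τ ++ [s]) i = changepoint τ i :=
  List.getD_append (0 :: τ) [s] 0 i (by simp; omega)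

lemma changepoint_append_singleton_length {τ : List ℕ} {s : ℕ} :
    changepoint (τ ++ [s]) (τ.length + 1) = s := by
  simp [changepoint]

lemma validCP_iff_pairwise {t : ℕ} {τ : List ℕ} :
    ValidCP t τ ↔ τ.Pairwise (· < ·) ∧ ∀ x ∈ τ, 0 < x ∧ x < t :=
  and_congr_left' List.isChain_iff_pairwise

lemma ValidCP.nil (t : ℕ) : ValidCP t [] := ⟨List.isChain_nil, by simp⟩

lemma ValidCP.length_le {t : ℕ} {τ : List ℕ} (hτ : ValidCP t τ) : τ.length ≤ t := by
  classical
  rw [validCP_iff_pairwise] at hτ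
  rw [← List.toFinset_card_of_nodup hτ.1.nodup]
  simpa using card_le_card (show τ.toFinset ⊆ range t from fun x hx =>
    mem_range.mpr (hτ.2 x (List.mem_toFinset.mp hx)).2)

lemma validCP_append_singleton_iff {t s : ℕ} {τ : List ℕ} :
    ValidCP t (τ ++ [s]) ↔ ValidCP s τ ∧ 0 < s ∧ s < t := by
  simp only [validCP_iff_pairwise, List.pairwise_append, List.mem_append,
    List.mem_singleton, List.pairwise_singleton, forall_eq, true_and]
  constructor
  · rintro ⟨⟨hτ, hlt⟩, hbound⟩
    exact ⟨⟨hτ, fun x hx => ⟨(hbound x (.inl hx)).1, hlt x hx⟩⟩, hbound s (.inr rfl)⟩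
  · rintro ⟨⟨hτ, hbound⟩, hs, hst⟩
    refine ⟨⟨hτ, fun x hx => (hbound x hx).2⟩, ?_⟩
    rintro x (hx | rfl)
    · exact ⟨(hbound x hx).1, (hbound x hx).2.trans hst⟩
    · exact ⟨hs, hst⟩

lemma segTotal_nil (t : ℕ) (φs : ℕ → ℝ) (φ : ℝ) :
    segTotal y σ β h t [] φs φ = segCost y σ 0 t (φs 0) φ + h t + β := by
  simp [segTotal_eq, changepoint]

lemma segTotal_append_singleton (t s : ℕ) (τ : List ℕ) (φs : ℕ → ℝ) (φ : ℝ) :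
    segTotal y σ β h t (τ ++ [s]) φs φ =
      segTotal y σ β h s τ φs (φs (τ.length + 1))
        + segCost y σ s t (φs (τ.length + 1)) φ + h (t - s) + β := by
  rw [segTotal_eq, segTotal_eq, List.length_append, List.length_singleton, sum_range_succ,
    sum_congr rfl fun i hi => by
      rw [changepoint_append_singleton_of_le (mem_range.mp hi).le,
        changepoint_append_singleton_of_le (mem_range.mp hi)],
    changepoint_append_singleton_of_le le_rfl, changepoint_append_singleton_length]
  push_cast
  ring

lemma segTotal_congr {t : ℕ} {τ : List ℕ} {φs φs' : ℕ → ℝ} (φ : ℝ)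
    (hφs : ∀ i ≤ τ.length, φs i = φs' i) :
    segTotal y σ β h t τ φs φ = segTotal y σ β h t τ φs' φ := by
  rw [segTotal_eq, segTotal_eq, hφs τ.length le_rfl,
    sum_congr rfl fun i hi => by
      rw [hφs i (mem_range.mp hi).le, hφs (i + 1) (mem_range.mp hi)]]

lemma neg_sum_abs_le {t d : ℕ} (hd : d ≤ t) : -∑ j ∈ range (t + 1), |h j| ≤ h d := by
  have : |h d| ≤ ∑ j ∈ range (t + 1), |h j| :=
    single_le_sum (fun j _ => abs_nonneg (h j)) (mem_range.mpr (Nat.lt_succ_of_le hd))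
  linarith [neg_abs_le (h d)]

variable (β h) in
def segFloor (t : ℕ) : ℝ := -((t + 1) * (∑ j ∈ range (t + 1), |h j| + |β|))

lemma segFloor_le_segTotal {s t : ℕ} (hst : s ≤ t) {τ : List ℕ} (hτ : ValidCP s τ)
    (φs : ℕ → ℝ) (φ : ℝ) : segFloor β h t ≤ segTotal y σ β h s τ φs φ := by
  set M := ∑ j ∈ range (t + 1), |h j|
  have hM : 0 ≤ M := sum_nonneg fun j _ => abs_nonneg (h j)
  have hle : ∀ i, changepoint τ i ≤ t :=
    fun i => (changepoint_le (fun x hx => (hτ.2 x hx).2.le) i).trans hst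
  have hsegment : ∀ i ∈ range τ.length, -M ≤
      segCost y σ (changepoint τ i) (changepoint τ (i + 1)) (φs i) (φs (i + 1))
        + h (changepoint τ (i + 1) - changepoint τ i) := by
    intro i _
    linarith [segCost_nonneg (y := y) (σ := σ) (changepoint τ i) (changepoint τ (i + 1))
      (φs i) (φs (i + 1)), neg_sum_abs_le (h := h)
      ((Nat.sub_le (changepoint τ (i + 1)) (changepoint τ i)).trans (hle (i + 1)))]
  have hsum := card_nsmul_le_sum _ _ _ hsegment
  rw [card_range, nsmul_eq_mul] at hsum
  have hlast := neg_sum_abs_le (h := h) ((Nat.sub_le s (changepoint τ τ.length)).trans hst)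
  have hβ : -|β| * ((τ.length : ℝ) + 1) ≤ β * ((τ.length : ℝ) + 1) :=
    mul_le_mul_of_nonneg_right (neg_abs_le β) (by positivity)
  have hlen : (τ.length : ℝ) + 1 ≤ t + 1 := by exact_mod_cast Nat.succ_le_succ (hτ.length_le.trans hst)
  rw [segFloor, segTotal_eq]
  linarith [segCost_nonneg (y := y) (σ := σ) (changepoint τ τ.length) s (φs τ.length) φ,
    mul_le_mul_of_nonneg_right hlen (add_nonneg hM (abs_nonneg β))]

lemma fDP_le_segTotal {t : ℕ} (ht : t ≠ 0) {τ : List ℕ} (hτ : ValidCP t τ)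
    (φs : ℕ → ℝ) (φ : ℝ) : fDP y σ β h t φ ≤ segTotal y σ β h t τ φs φ := by
  have : Nonempty (ℕ → ℝ) := ⟨0⟩
  have hbdd_fseg : BddBelow (Set.range fun τ' : {τ' // ValidCP t τ'} => fseg y σ β h t τ'.1 φ) :=
    ⟨_, Set.forall_mem_range.mpr fun τ' => le_ciInf fun φs => segFloor_le_segTotal le_rfl τ'.2 φs φ⟩
  have hbdd_segTotal : BddBelow (Set.range fun φs => segTotal y σ β h t τ φs φ) :=
    ⟨_, Set.forall_mem_range.mpr fun φs => segFloor_le_segTotal le_rfl hτ φs φ⟩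
  rw [fDP, if_neg ht]
  exact (ciInf_le hbdd_fseg ⟨τ, hτ⟩).trans (ciInf_le hbdd_segTotal φs)

lemma le_fDP {t : ℕ} (ht : t ≠ 0) {c φ : ℝ}
    (hc : ∀ τ, ValidCP t τ → ∀ φs, c ≤ segTotal y σ β h t τ φs φ) : c ≤ fDP y σ β h t φ := by
  have : Nonempty {τ : List ℕ // ValidCP t τ} := ⟨⟨[], ValidCP.nil t⟩⟩
  have : Nonempty (ℕ → ℝ) := ⟨0⟩
  rw [fDP, if_neg ht]
  exact le_ciInf fun τ => le_ciInf (hc τ.1 τ.2)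

lemma segFloor_le_fDP {s t : ℕ} (hst : s ≤ t) (φ : ℝ) : segFloor β h t ≤ fDP y σ β h s φ := by
  rcases eq_or_ne s 0 with rfl | hs
  · simp only [fDP, if_true, segFloor, neg_nonpos]
    positivity
  · exact le_fDP hs fun τ hτ φs => segFloor_le_segTotal hst hτ φs φ

lemma bddBelow_range_lastSegment {s t : ℕ} (hst : s ≤ t) (φ : ℝ) :
    BddBelow (Set.range fun φ' =>
      fDP y σ β h s φ' + segCost y σ s t φ' φ + h (t - s) + β) :=
  ⟨segFloor β h t + h (t - s) + β,
    Set.forall_mem_range.mpr fun φ' => by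
      linarith [segFloor_le_fDP (y := y) (σ := σ) (β := β) (h := h) hst φ',
        segCost_nonneg (y := y) (σ := σ) s t φ' φ]⟩

lemma fDP_le_lastSegment {s t : ℕ} (hst : s < t) (φ' φ : ℝ) :
    fDP y σ β h t φ ≤ fDP y σ β h s φ' + segCost y σ s t φ' φ + h (t - s) + β := by
  have ht : t ≠ 0 := by omega
  rcases eq_or_ne s 0 with rfl | hs
  · simpa [fDP, segTotal_nil] using fDP_le_segTotal ht (.nil t) (fun _ => φ') φ
  suffices fDP y σ β h t φ - (segCost y σ s t φ' φ + h (t - s) + β) ≤ fDP y σ β h s φ' by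
    linarith
  refine le_fDP hs fun τ hτ φs => ?_
  have hτs : ValidCP t (τ ++ [s]) :=
    validCP_append_singleton_iff.mpr ⟨hτ, Nat.pos_of_ne_zero hs, hst⟩
  have := fDP_le_segTotal (y := y) (σ := σ) (β := β) (h := h) ht hτs
    (Function.update φs (τ.length + 1) φ') φ
  rw [segTotal_append_singleton, Function.update_self,
    segTotal_congr φ' fun i hi => Function.update_of_ne (by omega) _ _] at this
  linarith

lemma exists_lastSegment_le_segTotal {t : ℕ} (ht : t ≠ 0) {τ : List ℕ} (hτ : ValidCP t τ)
    (φs : ℕ → ℝ) (φ : ℝ) :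
    ∃ s < t, ∃ φ', fDP y σ β h s φ' + segCost y σ s t φ' φ + h (t - s) + β
      ≤ segTotal y σ β h t τ φs φ := by
  rcases List.eq_nil_or_concat τ with rfl | ⟨τ, s, rfl⟩
  · exact ⟨0, Nat.pos_of_ne_zero ht, φs 0, by simp [fDP, segTotal_nil]⟩
  · rw [List.concat_eq_append, validCP_append_singleton_iff] at hτ
    refine ⟨s, hτ.2.2, φs (τ.length + 1), ?_⟩
    rw [List.concat_eq_append, segTotal_append_singleton]
    gcongr
    exact fDP_le_segTotal hτ.2.1.ne' hτ.1 φs _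

end Segmentation

theorem statement2_general (y : ℕ → ℝ) (σ : ℝ) (β : ℝ) (h : ℕ → ℝ) (t : ℕ) (ht1 : 1 ≤ t) (φ : ℝ) :
    fDP y σ β h t φ =
      ⨅ s : Fin t, ⨅ φ' : ℝ,
        (fDP y σ β h (s : ℕ) φ' + segCost y σ (s : ℕ) t φ' φ + h (t - (s : ℕ)) + β) := by
  have ht : t ≠ 0 := by omega
  have : Nonempty (Fin t) := ⟨⟨0, by omega⟩⟩
  refine le_antisymm (le_ciInf fun s => le_ciInf fun φ' => fDP_le_lastSegment s.2 φ' φ) ?_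
  refine le_fDP ht fun τ hτ φs => ?_
  obtain ⟨s, hst, φ', hle⟩ :=
    exists_lastSegment_le_segTotal (y := y) (σ := σ) (β := β) (h := h) ht hτ φs φ
  exact ((ciInf_le (Set.finite_range _).bddBelow ⟨s, hst⟩).trans
    (ciInf_le (bddBelow_range_lastSegment hst.le φ) φ')).trans hle

/-- dynamic programming recursion: for `1 ≤ t ≤ n` and every `φ`,
`f^t(φ) = min_{0 ≤ s ≤ t-1} inf_{φ'} [f^s(φ') + C(s,t,φ',φ) + h(t-s) + β]`,
with the convention `f^0 ≡ 0`. -/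
theorem statement2 (n : ℕ) (hn : 1 ≤ n) (y : ℕ → ℝ) (σ : ℝ) (hσ : 0 < σ)
    (β : ℝ) (hβ : 0 < β) (h : ℕ → ℝ)
    (t : ℕ) (ht1 : 1 ≤ t) (htn : t ≤ n) (φ : ℝ) :
    fDP y σ β h t φ =
      ⨅ s : Fin t, ⨅ φ' : ℝ,
        (fDP y σ β h (s : ℕ) φ' + segCost y σ (s : ℕ) t φ' φ + h (t - (s : ℕ)) + β) :=
  statement2_general y σ β h t ht1 φ
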